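/- Let C be a model category that is both left and right proper, and let Q be a (possibly non-functorial) homotopy localization construction on C satisfying conditions (A1)–(A5). Then C equipped with Q-equivalences as weak equivalences, Q-cofibrations (= cofibrations of C) as cofibrations, and Q-fibrations as fibrations is a model category C^Q. Moreover, a map f : X → Y in C is a Q-fibration if and only if f is a fibration in C and the commutative square with horizontal maps η_X : X → QX, η_Y : Y → QY and vertical maps f, Qf is a homotopy fibre square in C. -/

import Mathlib

universe w v u v' u'

open CategoryTheory CategoryTheory.Limits CategoryTheory.MonoidalCategory

namespace Paper

variable {C : Type u} [Category.{v} C]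

/-- `f` is a retract of `g`. -/
def IsRetractOf {X Y X' Y' : C} (f : X ⟶ Y) (g : X' ⟶ Y') : Prop :=
  ∃ (i : X ⟶ X') (r : X' ⟶ X) (i' : Y ⟶ Y') (r' : Y' ⟶ Y),
    i ≫ r = 𝟙 X ∧ i' ≫ r' = 𝟙 Y ∧ i ≫ g = f ≫ i' ∧ g ≫ r' = r ≫ f

/-- Stability of a class of maps under retracts. -/
def RetractStable (P : MorphismProperty C) : Prop :=
  ∀ ⦃X Y X' Y' : C⦄ (f : X ⟶ Y) (g : X' ⟶ Y'), IsRetractOf f g → P g → P f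

/-- The class of maps having the right lifting property with respect to `P`. -/
def rlpOf (P : MorphismProperty C) : MorphismProperty C :=
  fun _ _ p => ∀ ⦃A B : C⦄ (i : A ⟶ B), P i → HasLiftingProperty i p

/-- The class of maps having the left lifting property with respect to `P`. -/
def llpOf (P : MorphismProperty C) : MorphismProperty C :=
  fun _ _ i => ∀ ⦃X Y : C⦄ (p : X ⟶ Y), P p → HasLiftingProperty i p

/-- A (Quillen) model structure on a category, described by its three classes
of morphisms: weak equivalences, fibrations and cofibrations. -/
structure ModelStructure (C : Type u) [Category.{v} C] where
  weq : MorphismProperty C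
  fib : MorphismProperty C
  cof : MorphismProperty C
  weq_iso : ∀ ⦃X Y : C⦄ (f : X ⟶ Y), IsIso f → weq f
  weq_comp : ∀ ⦃X Y Z : C⦄ (f : X ⟶ Y) (g : Y ⟶ Z), weq f → weq g → weq (f ≫ g)
  weq_of_postcomp : ∀ ⦃X Y Z : C⦄ (f : X ⟶ Y) (g : Y ⟶ Z), weq g → weq (f ≫ g) → weq f
  weq_of_precomp : ∀ ⦃X Y Z : C⦄ (f : X ⟶ Y) (g : Y ⟶ Z), weq f → weq (f ≫ g) → weq g
  weq_retract : RetractStable weq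
  fib_retract : RetractStable fib
  cof_retract : RetractStable cof
  lift_cof_trivFib : ∀ ⦃A B X Y : C⦄ (i : A ⟶ B) (p : X ⟶ Y),
    cof i → fib p → weq p → HasLiftingProperty i p
  lift_trivCof_fib : ∀ ⦃A B X Y : C⦄ (i : A ⟶ B) (p : X ⟶ Y),
    cof i → weq i → fib p → HasLiftingProperty i p
  factor₁ : ∀ ⦃X Y : C⦄ (f : X ⟶ Y), ∃ (Z : C) (i : X ⟶ Z) (p : Z ⟶ Y),
    cof i ∧ fib p ∧ weq p ∧ i ≫ p = f
  factor₂ : ∀ ⦃X Y : C⦄ (f : X ⟶ Y), ∃ (Z : C) (i : X ⟶ Z) (p : Z ⟶ Y),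
    cof i ∧ weq i ∧ fib p ∧ i ≫ p = f

namespace ModelStructure

variable (M : ModelStructure C)

/-- An object is fibrant if the map to the terminal object is a fibration. -/
def Fibrant [HasTerminal C] (X : C) : Prop := M.fib (terminal.from X)

/-- An object is cofibrant if the map from the initial object is a cofibration. -/
def Cofibrant [HasInitial C] (X : C) : Prop := M.cof (initial.to X)

/-- Right properness: weak equivalences are stable under base change along fibrations. -/
def RightProper : Prop :=
  ∀ ⦃P X Y Z : C⦄ (fst : P ⟶ X) (snd : P ⟶ Y) (f : X ⟶ Z) (g : Y ⟶ Z),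
    IsPullback fst snd f g → M.weq f → M.fib g → M.weq snd

/-- Left properness: weak equivalences are stable under cobase change along cofibrations. -/
def LeftProper : Prop :=
  ∀ ⦃Z X Y P : C⦄ (f : Z ⟶ X) (g : Z ⟶ Y) (inl : X ⟶ P) (inr : Y ⟶ P),
    IsPushout f g inl inr → M.weq f → M.cof g → M.weq inr

/-- The opposite model structure on the opposite category. -/
def op : ModelStructure Cᵒᵖ where
  weq := fun _ _ f => M.weq f.unop
  fib := fun _ _ f => M.cof f.unop
  cof := fun _ _ f => M.fib f.unop
  weq_iso := by
    intro X Y f hf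
    refine M.weq_iso f.unop ⟨(CategoryTheory.inv (I := hf) f).unop, ?_, ?_⟩
    · rw [← unop_comp, IsIso.inv_hom_id, unop_id]
    · rw [← unop_comp, IsIso.hom_inv_id, unop_id]
  weq_comp := by
    intro X Y Z f g hf hg
    exact M.weq_comp g.unop f.unop hg hf
  weq_of_postcomp := by
    intro X Y Z f g hg hfg
    exact M.weq_of_precomp g.unop f.unop hg hfg
  weq_of_precomp := by
    intro X Y Z f g hf hfg
    exact M.weq_of_postcomp g.unop f.unop hf hfg
  weq_retract := by
    intro X Y X' Y' f g hr hg
    obtain ⟨i, r, i', r', h1, h2, h3, h4⟩ := hr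
    refine M.weq_retract f.unop g.unop
      ⟨r'.unop, i'.unop, r.unop, i.unop, ?_, ?_, ?_, ?_⟩ hg <;>
      simp only [← unop_comp, h1, h2, h3, h4, unop_id]
  fib_retract := by
    intro X Y X' Y' f g hr hg
    obtain ⟨i, r, i', r', h1, h2, h3, h4⟩ := hr
    refine M.cof_retract f.unop g.unop
      ⟨r'.unop, i'.unop, r.unop, i.unop, ?_, ?_, ?_, ?_⟩ hg <;>
      simp only [← unop_comp, h1, h2, h3, h4, unop_id]
  cof_retract := by
    intro X Y X' Y' f g hr hg
    obtain ⟨i, r, i', r', h1, h2, h3, h4⟩ := hr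
    refine M.fib_retract f.unop g.unop
      ⟨r'.unop, i'.unop, r.unop, i.unop, ?_, ?_, ?_, ?_⟩ hg <;>
      simp only [← unop_comp, h1, h2, h3, h4, unop_id]
  lift_cof_trivFib := by
    intro A B X Y i p hi hp hwp
    exact (HasLiftingProperty.iff_unop i p).2 (M.lift_trivCof_fib p.unop i.unop hp hwp hi)
  lift_trivCof_fib := by
    intro A B X Y i p hi hwi hp
    exact (HasLiftingProperty.iff_unop i p).2 (M.lift_cof_trivFib p.unop i.unop hp hi hwi)
  factor₁ := by
    intro X Y f
    obtain ⟨Z, i, p, hi, hwi, hp, hfac⟩ := M.factor₂ f.unop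
    exact ⟨Opposite.op Z, p.op, i.op, hp, hi, hwi, Quiver.Hom.unop_inj (by simpa using hfac)⟩
  factor₂ := by
    intro X Y f
    obtain ⟨Z, i, p, hi, hp, hwp, hfac⟩ := M.factor₁ f.unop
    exact ⟨Opposite.op Z, p.op, i.op, hp, hwp, hi, Quiver.Hom.unop_inj (by simpa using hfac)⟩

end ModelStructure

end Paper

namespace Paper

open CategoryTheory CategoryTheory.Limits CategoryTheory.MonoidalCategory

variable {C : Type u} [Category.{v} C]

/-- A category is `κ`-filtered if every diagram with fewer than `κ` morphisms
admits a cocone. -/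
def IsCardFiltered (J : Type v) [Category.{v} J] (κ : Cardinal.{v}) : Prop :=
  ∀ (S : Type v) (_ : SmallCategory S),
    Cardinal.mk ((s : S) × (t : S) × (s ⟶ t)) < κ →
      ∀ F : S ⥤ J, Nonempty (Limits.Cocone F)

/-- An object `X` is `κ`-presentable if `Hom(X, −)` preserves `κ`-filtered colimits. -/
def IsCardPresentable (κ : Cardinal.{v}) (X : C) : Prop :=
  ∀ (J : Type v) (_ : SmallCategory J), IsCardFiltered J κ →
    Nonempty (Limits.PreservesColimitsOfShape J (coyoneda.obj (Opposite.op X)))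

/-- A category is locally `κ`-presentable. -/
def IsLocallyPresentable (κ : Cardinal.{v}) (C : Type u) [Category.{v} C] : Prop :=
  HasColimits C ∧
  ∃ (ι : Type v) (G : ι → C), (∀ i, IsCardPresentable κ (G i)) ∧
    ∀ X : C, ∃ (J : Type v) (_ : SmallCategory J) (_ : IsCardFiltered J κ) (D : J ⥤ C)
      (c : Cocone D) (_ : IsColimit c), (∀ j, ∃ i, Nonempty (D.obj j ≅ G i)) ∧
        Nonempty (c.pt ≅ X)

/-- A category is class-locally presentable: it is complete and cocomplete and
every object is a `κ`-filtered colimit of `κ`-presentable objects, for some `κ`. -/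
def IsClassLocallyPresentable (C : Type u) [Category.{v} C] : Prop :=
  HasLimits C ∧ HasColimits C ∧
  ∃ κ : Cardinal.{v}, ∀ X : C,
    ∃ (J : Type v) (_ : SmallCategory J) (_ : IsCardFiltered J κ) (D : J ⥤ C)
      (c : Cocone D) (_ : IsColimit c), (∀ j, IsCardPresentable κ (D.obj j)) ∧
        Nonempty (c.pt ≅ X)

/-- A choice of generating cofibrations and generating trivial cofibrations,
which form sets (smallness) and have `κ`-presentable domains and codomains. -/
structure CofibrantGeneration (M : ModelStructure C) (κ : Cardinal.{v}) where
  I : MorphismProperty C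
  J : MorphismProperty C
  small_I : Small.{v} {f : Arrow C // I f.hom}
  small_J : Small.{v} {f : Arrow C // J f.hom}
  presentable_I : ∀ ⦃X Y : C⦄ (f : X ⟶ Y), I f →
    IsCardPresentable κ X ∧ IsCardPresentable κ Y
  presentable_J : ∀ ⦃X Y : C⦄ (f : X ⟶ Y), J f →
    IsCardPresentable κ X ∧ IsCardPresentable κ Y
  fib_eq : ∀ ⦃X Y : C⦄ (f : X ⟶ Y), M.fib f ↔ rlpOf J f
  trivFib_eq : ∀ ⦃X Y : C⦄ (f : X ⟶ Y), (M.fib f ∧ M.weq f) ↔ rlpOf I f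

/-- A model category is `κ`-combinatorial if it is locally `κ`-presentable and
cofibrantly generated with `κ`-presentable (co)domains of the generating maps. -/
def IsCombinatorial (M : ModelStructure C) (κ : Cardinal.{v}) : Prop :=
  IsLocallyPresentable κ C ∧ Nonempty (CofibrantGeneration M κ)

/-- Class-cofibrantly generated: there exist *classes* of generating
cofibrations and trivial cofibrations with presentable domains and codomains. -/
def IsClassCofibrantlyGenerated (M : ModelStructure C) : Prop :=
  ∃ (κ : Cardinal.{v}) (I J : MorphismProperty C),
    (∀ ⦃X Y : C⦄ (f : X ⟶ Y), I f → IsCardPresentable κ X ∧ IsCardPresentable κ Y) ∧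
    (∀ ⦃X Y : C⦄ (f : X ⟶ Y), J f → IsCardPresentable κ X ∧ IsCardPresentable κ Y) ∧
    (∀ ⦃X Y : C⦄ (f : X ⟶ Y), M.fib f ↔ rlpOf J f) ∧
    (∀ ⦃X Y : C⦄ (f : X ⟶ Y), (M.fib f ∧ M.weq f) ↔ rlpOf I f)

/-- A model category is class-combinatorial if it is class-locally presentable
and class-cofibrantly generated. -/
def IsClassCombinatorial (M : ModelStructure C) : Prop :=
  IsClassLocallyPresentable C ∧ IsClassCofibrantlyGenerated M

section Cell

/-- `g` is a cobase change (pushout) of some map in `P`. -/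
def IsCobaseChangeOf (P : MorphismProperty C) : MorphismProperty C :=
  fun _ _ g => ∃ (A B : C) (f : A ⟶ B) (t : A ⟶ _) (b : B ⟶ _),
    P f ∧ IsPushout f t b g

variable {J : Type w} [Preorder J]

/-- The restriction of a chain `D : J ⥤ C` to the elements below `j`. -/
def restrictLT (D : J ⥤ C) (j : J) : {i : J // i < j} ⥤ C :=
  (Monotone.functor (f := fun i : {i : J // i < j} => (i : J)) fun _ _ h => h) ⋙ D

/-- The canonical cocone on `restrictLT D j` with point `D.obj j`. -/
def coconeLT (D : J ⥤ C) (j : J) : Cocone (restrictLT D j) where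
  pt := D.obj j
  ι :=
    { app := fun i => D.map (homOfLE i.2.le)
      naturality := fun i i' f => by
        dsimp [restrictLT, Monotone.functor]
        rw [← D.map_comp, Category.comp_id]
        rfl }

/-- Relative cell complexes on a class `P`: transfinite compositions of cobase
changes of maps in `P`. -/
def IsRelCell (P : MorphismProperty C) : MorphismProperty C := fun X Y f =>
  ∃ (J : Type w) (_ : LinearOrder J) (_ : SuccOrder J) (_ : OrderBot J)
    (_ : WellFoundedLT J) (D : J ⥤ C) (c : Cocone D) (_ : IsColimit c)
    (e : X ≅ D.obj ⊥) (e' : c.pt ≅ Y),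
    (∀ j : J, ¬ IsMax j → IsCobaseChangeOf P (D.map (homOfLE (Order.le_succ j)))) ∧
    (∀ j : J, Order.IsSuccLimit j → Nonempty (IsColimit (coconeLT D j))) ∧
    f = e.hom ≫ c.ι.app ⊥ ≫ e'.hom

end Cell

section Monoidal

variable (V : Type u) [Category.{v} V] [MonoidalCategory V]

variable {V}

/-- The class of maps of the form `j ▷ Z` (a map in `P` tensored with an object),
up to isomorphism of arrows. -/
def tensoredClass (P : MorphismProperty V) : MorphismProperty V :=
  fun _ _ f => ∃ (A B Z : V) (j : A ⟶ B), P j ∧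
    Nonempty (Arrow.mk f ≅ Arrow.mk (j ▷ Z))

/-- The monoid axiom: every relative cell complex built from maps
`j ⊗ Z` with `j` a trivial cofibration is a weak equivalence. -/
def MonoidAxiom (M : ModelStructure V) : Prop :=
  ∀ ⦃X Y : V⦄ (f : X ⟶ Y),
    IsRelCell.{v} (tensoredClass (fun _ _ j => M.cof j ∧ M.weq j)) f → M.weq f

/-- Strong left properness: cobase changes of weak equivalences along relative cell
complexes built from maps `i ⊗ Z` with `i` a cofibration are weak equivalences. -/
def StronglyLeftProper (M : ModelStructure V) : Prop :=
  ∀ ⦃Z X Y P : V⦄ (f : Z ⟶ X) (g : Z ⟶ Y) (inl : X ⟶ P) (inr : Y ⟶ P),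
    IsPushout f g inl inr → M.weq f →
    IsRelCell.{v} (tensoredClass M.cof) g → M.weq inr

end Monoidal

section PushoutProduct

variable {K : Type u} [Category.{v} K] {V : Type u'} [Category.{v'} V]

/-- The pushout-product of `f : X ⟶ Y` (in `K`) and `i : A ⟶ B` (in `V`) with
respect to a bifunctor `T : K ⥤ V ⥤ K` (an action of `V` on `K`). -/
noncomputable def pushoutProd (T : K ⥤ V ⥤ K) [HasPushouts K]
    {X Y : K} {A B : V} (f : X ⟶ Y) (i : A ⟶ B) :
    pushout ((T.obj X).map i) ((T.map f).app A) ⟶ (T.obj Y).obj B :=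
  pushout.desc ((T.map f).app B) ((T.obj Y).map i) ((T.map f).naturality i)

/-- The pushout-product axiom for an action `T` of a monoidal model category `V`
on a model category `K`; this is the key axiom of a `V`-model category. -/
def PushoutProductAxiom [HasPushouts K] (MK : ModelStructure K)
    (MV : ModelStructure V) (T : K ⥤ V ⥤ K) : Prop :=
  (∀ ⦃X Y : K⦄ ⦃A B : V⦄ (f : X ⟶ Y) (i : A ⟶ B),
      MK.cof f → MV.cof i → MK.cof (pushoutProd T f i)) ∧
  (∀ ⦃X Y : K⦄ ⦃A B : V⦄ (f : X ⟶ Y) (i : A ⟶ B),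
      MK.cof f → MK.weq f → MV.cof i → MK.weq (pushoutProd T f i)) ∧
  (∀ ⦃X Y : K⦄ ⦃A B : V⦄ (f : X ⟶ Y) (i : A ⟶ B),
      MK.cof f → MV.cof i → MV.weq i → MK.weq (pushoutProd T f i))

end PushoutProduct

end Paper

namespace Paper

open CategoryTheory CategoryTheory.Limits CategoryTheory.MonoidalCategory Opposite

section QuillenPairs

variable {D₁ : Type u} [Category.{v} D₁] {D₂ : Type u'} [Category.{v'} D₂]

/-- A functor is left Quillen if it preserves cofibrations and trivial cofibrations. -/
def IsLeftQuillen (M₁ : ModelStructure D₁) (M₂ : ModelStructure D₂) (L : D₁ ⥤ D₂) : Prop :=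
  (∀ ⦃X Y : D₁⦄ (f : X ⟶ Y), M₁.cof f → M₂.cof (L.map f)) ∧
  (∀ ⦃X Y : D₁⦄ (f : X ⟶ Y), M₁.cof f → M₁.weq f →
      M₂.cof (L.map f) ∧ M₂.weq (L.map f))

/-- A Quillen adjunction is a Quillen equivalence if for every cofibrant `A` and
fibrant `X`, a map `L A ⟶ X` is a weak equivalence iff its adjoint `A ⟶ R X` is. -/
def IsQuillenEquivalence [HasInitial D₁] [HasTerminal D₂]
    (M₁ : ModelStructure D₁) (M₂ : ModelStructure D₂)
    (L : D₁ ⥤ D₂) (R : D₂ ⥤ D₁) (adj : L ⊣ R) : Prop :=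
  IsLeftQuillen M₁ M₂ L ∧
  ∀ (A : D₁) (X : D₂), M₁.Cofibrant A → M₂.Fibrant X →
    ∀ f : L.obj A ⟶ X, (M₂.weq f ↔ M₁.weq ((adj.homEquiv A X) f))

end QuillenPairs

section HtpySquares

variable {C : Type u} [Category.{v} C]

/-- A commutative square is a homotopy pullback square if, after replacing one
of the legs by a fibration, the induced comparison map to the pullback is a
weak equivalence. -/
def IsHtpyPullback (M : ModelStructure C) [HasPullbacks C] {P X Y Z : C}
    (fst : P ⟶ X) (snd : P ⟶ Y) (f : X ⟶ Z) (g : Y ⟶ Z) : Prop :=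
  ∃ w : fst ≫ f = snd ≫ g,
    ∀ (Y' : C) (j : Y ⟶ Y') (p : Y' ⟶ Z), M.weq j → M.fib p →
      ∀ fac : j ≫ p = g,
        M.weq (pullback.lift fst (snd ≫ j) (by rw [Category.assoc, fac, w]))

/-- A commutative square is a homotopy pushout square if, after replacing one of
the legs by a cofibration, the induced comparison map from the pushout is a weak
equivalence. -/
def IsHtpyPushout (M : ModelStructure C) [HasPushouts C] {Z X Y P : C}
    (f : Z ⟶ X) (g : Z ⟶ Y) (inl : X ⟶ P) (inr : Y ⟶ P) : Prop :=
  ∃ w : f ≫ inl = g ≫ inr,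
    ∀ (X' : C) (c : Z ⟶ X') (v : X' ⟶ X), M.cof c → M.weq v →
      ∀ fac : c ≫ v = f,
        M.weq (pushout.desc (v ≫ inl) inr (by rw [← Category.assoc, fac, w]))

/-- The induced map on homotopy-category homs into `Wo` is a bijection. -/
def HoHomBij (W : MorphismProperty C) {P R : C} (g : P ⟶ R) (Wo : C) : Prop :=
  Function.Bijective (fun φ : (W.Q.obj R ⟶ W.Q.obj Wo) => W.Q.map g ≫ φ)

/-- `Wo` is local with respect to the class of maps `H`. -/
def IsLocalObject [HasTerminal C] (M : ModelStructure C)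
    (H : MorphismProperty C) (Wo : C) : Prop :=
  M.Fibrant Wo ∧ ∀ ⦃P R : C⦄ (g : P ⟶ R), H g → HoHomBij M.weq g Wo

/-- `f` is an `H`-local equivalence. -/
def IsLocalEquiv [HasTerminal C] (M : ModelStructure C)
    (H : MorphismProperty C) {X Y : C} (f : X ⟶ Y) : Prop :=
  ∀ Wo : C, IsLocalObject M H Wo → HoHomBij M.weq f Wo

end HtpySquares

section SmallFunctors

variable {K : Type u} [Category.{v} K] {V : Type u} [Category.{v} V]

/-- A functor is small if it is a left Kan extension of its restriction to some
small full subcategory of the domain. -/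
def SmallFunctor (F : K ⥤ V) : Prop :=
  ∃ (ι : Type v) (_ : SmallCategory ι) (L : ι ⥤ K) (_ : L.Full) (_ : L.Faithful),
    Nonempty (F.IsLeftKanExtension (𝟙 (L ⋙ F)))

/-- The category of small functors from `K` to `V`. -/
abbrev SmallFunctorCat (K : Type u) [Category.{v} K] (V : Type u) [Category.{v} V] :=
  ObjectProperty.FullSubcategory (fun F : K ⥤ V => SmallFunctor F)

/-- Evaluation of a morphism of small functors at an object. -/
def appF {F G : SmallFunctorCat K V} (g : F ⟶ G) (X : K) :
    F.obj.obj X ⟶ G.obj.obj X :=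
  ((ObjectProperty.ι _).map g).app X

/-- Fibrant-projective weak equivalences: maps which are weak equivalences on
all fibrant objects. -/
def fibProjWeq [HasTerminal K] (MV : ModelStructure V) (MK : ModelStructure K) :
    MorphismProperty (SmallFunctorCat K V) :=
  fun _ _ g => ∀ X : K, MK.Fibrant X → MV.weq (appF g X)

/-- Fibrant-projective fibrations: maps which are fibrations on all fibrant
objects. -/
def fibProjFib [HasTerminal K] (MV : ModelStructure V) (MK : ModelStructure K) :
    MorphismProperty (SmallFunctorCat K V) :=
  fun _ _ g => ∀ X : K, MK.Fibrant X → MV.fib (appF g X)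

/-- The class `S` of maps which are trivial fibrations on all fibrant objects. -/
def Sclass [HasTerminal K] (MV : ModelStructure V) (MK : ModelStructure K) :
    MorphismProperty (SmallFunctorCat K V) :=
  fun _ _ g => ∀ X : K, MK.Fibrant X → (MV.fib (appF g X) ∧ MV.weq (appF g X))

/-- `MF` is the fibrant-projective model structure determined by `MV` and `MK`. -/
def IsFibrantProjective [HasTerminal K] (MV : ModelStructure V)
    (MK : ModelStructure K) (MF : ModelStructure (SmallFunctorCat K V)) : Prop :=
  MF.weq = fibProjWeq MV MK ∧ MF.fib = fibProjFib MV MK ∧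
  MF.cof = llpOf (fun _ _ p => MF.fib p ∧ MF.weq p)

/-- A small functor is a homotopy functor if it preserves weak equivalences
between fibrant objects. -/
def IsHomotopyFunctor [HasTerminal K] (MV : ModelStructure V)
    (MK : ModelStructure K) (F : K ⥤ V) : Prop :=
  ∀ ⦃X Y : K⦄ (f : X ⟶ Y), MK.Fibrant X → MK.Fibrant Y → MK.weq f →
    MV.weq (F.map f)

section Tensoring

variable [MonoidalCategory V]

/-- Pointwise tensoring of a functor by an object of `V`. -/
def ptTensor (F : K ⥤ V) (A : V) : K ⥤ V := F ⋙ tensorRight A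

/-- The map of pointwise tensorings induced by `i : A ⟶ B`. -/
def ptTensorMap (F : K ⥤ V) {A B : V} (i : A ⟶ B) :
    ptTensor F A ⟶ ptTensor F B :=
  Functor.whiskerLeft F ((curriedTensor V).flip.map i)

/-- The data of an enriched hom bifunctor for a `V`-category `K`, whose
representables (and their tensorings) are small functors, and whose underlying
functor is the ordinary hom bifunctor of `K`. -/
structure EnrichedHomData (V K : Type u) [Category.{v} V] [Category.{v} K]
    [MonoidalCategory V] where
  eHom : Kᵒᵖ ⥤ K ⥤ V
  small : ∀ X : K, SmallFunctor (eHom.obj (op X))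
  smallTensor : ∀ (X : K) (A : V), SmallFunctor (ptTensor (eHom.obj (op X)) A)
  underlying : Nonempty
    (eHom ⋙ (Functor.whiskeringRight K V (Type v)).obj (coyoneda.obj (op (𝟙_ V))) ≅
      Functor.curry.obj (Functor.hom K))

/-- The representable functor `R^X = hom(X, −)` as a small functor. -/
def EnrichedHomData.R (E : EnrichedHomData V K) (X : K) : SmallFunctorCat K V :=
  ⟨E.eHom.obj (op X), E.small X⟩

/-- The map `R^Y ⟶ R^X` induced by `w : X ⟶ Y`. -/
def EnrichedHomData.Rmap (E : EnrichedHomData V K) {X Y : K} (w : X ⟶ Y) :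
    E.R Y ⟶ E.R X :=
  ObjectProperty.homMk (E.eHom.map w.op)

/-- The tensoring `R^X ⊗ A` of a representable by an object of `V`. -/
def EnrichedHomData.RT (E : EnrichedHomData V K) (X : K) (A : V) :
    SmallFunctorCat K V :=
  ⟨ptTensor (E.eHom.obj (op X)) A, E.smallTensor X A⟩

/-- The map `R^X ⊗ A ⟶ R^X ⊗ B` induced by `i : A ⟶ B`. -/
def EnrichedHomData.RTmap (E : EnrichedHomData V K) (X : K) {A B : V}
    (i : A ⟶ B) : E.RT X A ⟶ E.RT X B :=
  ObjectProperty.homMk (ptTensorMap (E.eHom.obj (op X)) i)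

/-- The Yoneda embedding `Kᵒᵖ ⥤ V^K` into small functors. -/
def EnrichedHomData.yonedaEmbedding (E : EnrichedHomData V K) :
    Kᵒᵖ ⥤ SmallFunctorCat K V :=
  ObjectProperty.lift _ E.eHom (fun X => E.small X.unop)

/-- The class `I_F` (resp. `J_F`) of generating (trivial) cofibrations of the
fibrant-projective model structure: maps `R^X ⊗ A ⟶ R^X ⊗ B` with `X` fibrant
and `A ⟶ B` a generating (trivial) cofibration of `V`. -/
def genClass [HasTerminal K] (E : EnrichedHomData V K) (MK : ModelStructure K)
    (IV : MorphismProperty V) : MorphismProperty (SmallFunctorCat K V) :=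
  fun _ _ g => ∃ (X : K) (_ : MK.Fibrant X) (A B : V) (i : A ⟶ B), IV i ∧
    Nonempty (Arrow.mk g ≅ Arrow.mk (E.RTmap X i))

/-- The class `H` of maps `R^B ⟶ R^A` induced by weak equivalences `A ⟶ B`
between fibrant objects. -/
def Hclass [HasTerminal K] (E : EnrichedHomData V K) (MK : ModelStructure K) :
    MorphismProperty (SmallFunctorCat K V) :=
  fun _ _ g => ∃ (A B : K) (w : A ⟶ B), MK.Fibrant A ∧ MK.Fibrant B ∧ MK.weq w ∧
    Nonempty (Arrow.mk g ≅ Arrow.mk (E.Rmap w))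

/-- The class `C_μ` of maps `R^A ⊗ L ⟶ R^A ⊗ L'` with `A` a fibrant and
cofibrant `μ`-presentable object, and `L ⟶ L'` a generating cofibration. -/
def CmuClass [HasTerminal K] [HasInitial K] (E : EnrichedHomData V K)
    (MK : ModelStructure K) (IV : MorphismProperty V) (μ : Cardinal.{v}) :
    MorphismProperty (SmallFunctorCat K V) :=
  fun _ _ g => ∃ (A : K) (_ : MK.Fibrant A) (_ : MK.Cofibrant A)
    (_ : IsCardPresentable μ A) (L L' : V) (i : L ⟶ L'), IV i ∧
    Nonempty (Arrow.mk g ≅ Arrow.mk (E.RTmap A i))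

/-- A small functor is `C`-cellular if it is a `C_μ`-cell complex for some `μ`. -/
def CCellular [HasTerminal K] [HasInitial K] [HasInitial (SmallFunctorCat K V)]
    (E : EnrichedHomData V K) (MK : ModelStructure K) (IV : MorphismProperty V)
    (X : SmallFunctorCat K V) : Prop :=
  ∃ μ : Cardinal.{v}, IsRelCell.{max u (v + 1)} (CmuClass E MK IV μ) (initial.to X)

end Tensoring

end SmallFunctors

end Paper

namespace Paper

open CategoryTheory CategoryTheory.Limits CategoryTheory.MonoidalCategory Opposite

section BF

variable {C : Type u} [Category.{v} C]

/-- A (possibly non-functorial) homotopy localization construction on a model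
category: coaugmented endo-assignments `Q`, `η`, `qmap` which preserve weak
equivalences and are homotopy idempotent. -/
structure HtpyLocalization (M : ModelStructure C) where
  Q : C → C
  η : ∀ X : C, X ⟶ Q X
  qmap : ∀ {X Y : C}, (X ⟶ Y) → (Q X ⟶ Q Y)
  qmap_weq : ∀ ⦃X Y : C⦄ (f : X ⟶ Y), M.weq f → M.weq (qmap f)
  idem_eta : ∀ X : C, M.weq (η (Q X))
  idem_q : ∀ X : C, M.weq (qmap (η X))

namespace HtpyLocalization

variable {M : ModelStructure C} (L : HtpyLocalization M)

/-- `Q`-equivalences. -/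
def QEq : MorphismProperty C := fun _ _ f => M.weq (L.qmap f)

/-- `Q`-fibrations: maps with the right lifting property with respect to all
cofibrations that are `Q`-equivalences. -/
def QFib : MorphismProperty C :=
  rlpOf (fun _ _ g => M.cof g ∧ L.QEq g)

/-- Condition (A1): naturality of the coaugmentation. -/
def CondNatural : Prop :=
  ∀ ⦃X Y : C⦄ (f : X ⟶ Y), f ≫ L.η Y = L.η X ≫ L.qmap f

/-- Condition (A2): `Q`-equivalences are stable under retracts. -/
def CondRetract : Prop := RetractStable L.QEq

/-- Condition (A3): `Q`-equivalences satisfy two-out-of-three. -/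
def CondTwoOutOfThree : Prop :=
  (∀ ⦃X Y Z : C⦄ (f : X ⟶ Y) (g : Y ⟶ Z), L.QEq f → L.QEq g → L.QEq (f ≫ g)) ∧
  (∀ ⦃X Y Z : C⦄ (f : X ⟶ Y) (g : Y ⟶ Z), L.QEq g → L.QEq (f ≫ g) → L.QEq f) ∧
  (∀ ⦃X Y Z : C⦄ (f : X ⟶ Y) (g : Y ⟶ Z), L.QEq f → L.QEq (f ≫ g) → L.QEq g)

/-- Condition (A4): every commutative square admits a commutative cube over it
whose vertices receive the `Q`-construction up to weak equivalence. -/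
def CondCube : Prop :=
  ∀ ⦃X₁ X₂ X₃ X₄ : C⦄ (f₁₂ : X₁ ⟶ X₂) (f₁₃ : X₁ ⟶ X₃) (f₂₄ : X₂ ⟶ X₄)
    (f₃₄ : X₃ ⟶ X₄), f₁₂ ≫ f₂₄ = f₁₃ ≫ f₃₄ →
    ∃ (Q₁ Q₂ Q₃ Q₄ : C) (q₁ : X₁ ⟶ Q₁) (q₂ : X₂ ⟶ Q₂) (q₃ : X₃ ⟶ Q₃)
      (q₄ : X₄ ⟶ Q₄) (g₁₂ : Q₁ ⟶ Q₂) (g₁₃ : Q₁ ⟶ Q₃) (g₂₄ : Q₂ ⟶ Q₄)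
      (g₃₄ : Q₃ ⟶ Q₄) (w₁ : L.Q X₁ ⟶ Q₁) (w₂ : L.Q X₂ ⟶ Q₂)
      (w₃ : L.Q X₃ ⟶ Q₃) (w₄ : L.Q X₄ ⟶ Q₄),
      M.weq w₁ ∧ M.weq w₂ ∧ M.weq w₃ ∧ M.weq w₄ ∧
      q₁ = L.η X₁ ≫ w₁ ∧ q₂ = L.η X₂ ≫ w₂ ∧ q₃ = L.η X₃ ≫ w₃ ∧
      q₄ = L.η X₄ ≫ w₄ ∧
      g₁₂ ≫ g₂₄ = g₁₃ ≫ g₃₄ ∧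
      q₁ ≫ g₁₂ = f₁₂ ≫ q₂ ∧ q₁ ≫ g₁₃ = f₁₃ ≫ q₃ ∧
      q₂ ≫ g₂₄ = f₂₄ ≫ q₄ ∧ q₃ ≫ g₃₄ = f₃₄ ≫ q₄ ∧
      (M.weq g₁₂ ↔ M.weq (L.qmap f₁₂)) ∧ (M.weq g₁₃ ↔ M.weq (L.qmap f₁₃)) ∧
      (M.weq g₂₄ ↔ M.weq (L.qmap f₂₄)) ∧ (M.weq g₃₄ ↔ M.weq (L.qmap f₃₄))

/-- Condition (A5): the base change of a `Q`-equivalence along a `Q`-fibration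
is a `Q`-equivalence. -/
def CondBaseChange : Prop :=
  ∀ ⦃W X Y Z : C⦄ (t : W ⟶ X) (g : W ⟶ Y) (f : X ⟶ Z) (h : Y ⟶ Z),
    IsPullback t g f h → L.QFib h → L.QEq f → L.QEq g

end HtpyLocalization

end BF

section QConstr

variable {V : Type u} [Category.{v} V] [HasInitial V]
variable {A : Type u'} [Category.{v'} A] [HasInitial A]

/-- The (non-functorial) `Q`-construction on the category of small functors:
a choice, for every object `F`, of a cofibrant replacement `crep F`, a fibrant
replacement in `Vᵒᵖ` of `Z (crep F)`, a mapping-cylinder factorization of the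
composite of the unit of the adjunction `Z ⊣ Y` with `Y` applied to the fibrant
replacement, and the pushout `Q F = F ⊔_{crep F} cyl F`; together with its
action on morphisms, induced by chosen lifts between cofibrant replacements. -/
structure QConstruction (MV : ModelStructure V) (MA : ModelStructure A)
    (Z : A ⥤ Vᵒᵖ) (Y : Vᵒᵖ ⥤ A) (adj : Z ⊣ Y) where
  crep : A → A
  cr : ∀ F : A, crep F ⟶ F
  crep_cofibrant : ∀ F : A, MA.Cofibrant (crep F)
  cr_weq : ∀ F : A, MA.weq (cr F)
  cr_fib : ∀ F : A, MA.fib (cr F)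
  frep : A → Vᵒᵖ
  fr : ∀ F : A, Z.obj (crep F) ⟶ frep F
  fr_weq : ∀ F : A, MV.weq (fr F).unop
  fr_opcof : ∀ F : A, MV.fib (fr F).unop
  frep_cofibrant : ∀ F : A, MV.Cofibrant ((frep F).unop)
  cyl : A → A
  cylIn : ∀ F : A, crep F ⟶ cyl F
  cylOut : ∀ F : A, cyl F ⟶ Y.obj (frep F)
  cylIn_cof : ∀ F : A, MA.cof (cylIn F)
  cylOut_weq : ∀ F : A, MA.weq (cylOut F)
  cyl_fac : ∀ F : A, cylIn F ≫ cylOut F = adj.unit.app (crep F) ≫ Y.map (fr F)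
  Q : A → A
  i : ∀ F : A, F ⟶ Q F
  toQ : ∀ F : A, cyl F ⟶ Q F
  isPushout : ∀ F : A, IsPushout (cr F) (cylIn F) (i F) (toQ F)
  qmap : ∀ {F G : A}, (F ⟶ G) → (Q F ⟶ Q G)
  crmap : ∀ {F G : A}, (F ⟶ G) → (crep F ⟶ crep G)
  crmap_comm : ∀ ⦃F G : A⦄ (f : F ⟶ G), crmap f ≫ cr G = cr F ≫ f
  frmap : ∀ {F G : A}, (F ⟶ G) → (frep F ⟶ frep G)
  frmap_comm : ∀ ⦃F G : A⦄ (f : F ⟶ G),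
    fr F ≫ frmap f = Z.map (crmap f) ≫ fr G
  cylmap : ∀ {F G : A}, (F ⟶ G) → (cyl F ⟶ cyl G)
  cylmap_in : ∀ ⦃F G : A⦄ (f : F ⟶ G), cylIn F ≫ cylmap f = crmap f ≫ cylIn G
  cylmap_out : ∀ ⦃F G : A⦄ (f : F ⟶ G),
    cylmap f ≫ cylOut G = cylOut F ≫ Y.map (frmap f)
  qmap_i : ∀ ⦃F G : A⦄ (f : F ⟶ G), i F ≫ qmap f = f ≫ i G
  qmap_toQ : ∀ ⦃F G : A⦄ (f : F ⟶ G), toQ F ≫ qmap f = cylmap f ≫ toQ G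

namespace QConstruction

variable {MV : ModelStructure V} {MA : ModelStructure A}
variable {Z : A ⥤ Vᵒᵖ} {Y : Vᵒᵖ ⥤ A} {adj : Z ⊣ Y}
variable (qc : QConstruction MV MA Z Y adj)

/-- `Q`-equivalences for the `Q`-construction. -/
def QEq : MorphismProperty A := fun _ _ f => MA.weq (qc.qmap f)

/-- `Q`-fibrations for the `Q`-construction. -/
def QFib : MorphismProperty A := rlpOf (fun _ _ g => MA.cof g ∧ qc.QEq g)

/-- An object is `Q`-local if it is fibrant and its coaugmentation is a weak
equivalence. -/
def QLocal [HasTerminal A] (X : A) : Prop := MA.Fibrant X ∧ MA.weq (qc.i X)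

end QConstruction

end QConstr

end Paper

namespace Paper

open CategoryTheory CategoryTheory.Limits CategoryTheory.MonoidalCategory Opposite

section Stable

variable {C : Type u} [Category.{v} C]

/-- Two maps are homotopic (identified in the homotopy category). -/
def hEq (M : ModelStructure C) {X Y : C} (f g : X ⟶ Y) : Prop :=
  M.weq.Q.map f = M.weq.Q.map g

/-- A model structure is stable if homotopy pullback squares agree with
homotopy pushout squares. -/
def IsStable (M : ModelStructure C) [HasPullbacks C] [HasPushouts C] : Prop :=
  ∀ ⦃W X Y Z : C⦄ (f : W ⟶ X) (g : W ⟶ Y) (h : X ⟶ Z) (k : Y ⟶ Z),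
    (IsHtpyPullback M f g h k ↔ IsHtpyPushout M f g h k)

/-- Objects connected by a zig-zag of maps in the class `P`. -/
def ZigZagEquiv (P : MorphismProperty C) (X Y : C) : Prop :=
  Relation.EqvGen (fun X Y : C => ∃ f : X ⟶ Y, P f) X Y

end Stable

section Duality

variable {V : Type u} [Category.{v} V] [MonoidalCategory V]

/-- `DA` is a Spanier-Whitehead dual of `A` (with respect to the fibrant
replacement `s : 𝟙_ V ⟶ Shat` of the sphere/unit): there are evaluation and
coevaluation maps satisfying the triangle identities up to homotopy. -/
def IsSWDuality (MV : ModelStructure V) {Shat : V} (s : 𝟙_ V ⟶ Shat)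
    (A DA : V) : Prop :=
  ∃ (ev : A ⊗ DA ⟶ Shat) (coev : 𝟙_ V ⟶ DA ⊗ A),
    hEq MV ((ρ_ A).inv ≫ (A ◁ coev) ≫ (α_ A DA A).inv ≫ (ev ▷ A))
      ((λ_ A).inv ≫ (s ▷ A)) ∧
    hEq MV ((λ_ DA).inv ≫ (coev ▷ DA) ≫ (α_ DA A DA).hom ≫ (DA ◁ ev))
      ((ρ_ DA).inv ≫ (DA ◁ s))

/-- A spectrum is compact (equivalently, strongly dualizable) if it admits a
Spanier-Whitehead duality datum. -/
def IsCompactObject (MV : ModelStructure V) {Shat : V} (s : 𝟙_ V ⟶ Shat)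
    (A : V) [HasInitial V] : Prop :=
  ∃ DA : V, MV.Cofibrant DA ∧ IsSWDuality MV s A DA

end Duality

section EClasses

variable {V : Type u} [Category.{v} V] [MonoidalCategory V]

/-- The class `F₁`: for every homotopy pullback square in `V` with vertices
`A, B, C', D`, the comparison map from the homotopy pushout of
`R^C' ← R^D → R^B` to `R^A`. -/
def F1Class (E : EnrichedHomData V V) (MV : ModelStructure V) [HasPullbacks V]
    (MF : ModelStructure (SmallFunctorCat V V))
    [HasPushouts (SmallFunctorCat V V)] :
    MorphismProperty (SmallFunctorCat V V) :=
  fun P Q' f =>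
    ∃ (A B C' D : V) (g1 : A ⟶ B) (g2 : A ⟶ C') (g3 : B ⟶ D) (g4 : C' ⟶ D),
      IsHtpyPullback MV g1 g2 g3 g4 ∧
      ∃ (inlP : E.R B ⟶ P) (inrP : E.R C' ⟶ P) (e : Q' ≅ E.R A),
        IsHtpyPushout MF (E.Rmap g3) (E.Rmap g4) inlP inrP ∧
        inlP ≫ f ≫ e.hom = E.Rmap g1 ∧ inrP ≫ f ≫ e.hom = E.Rmap g2

/-- The class `F₂`: for every set-indexed family of spectra, the canonical map
`⨿ R^{X_i} ⟶ R^{∏ X_i}`. -/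
def F2Class (E : EnrichedHomData V V) [HasProducts.{v} V] :
    MorphismProperty (SmallFunctorCat V V) :=
  fun P Q' f =>
    ∃ (ι : Type v) (Xs : ι → V) (inj : ∀ i, E.R (Xs i) ⟶ P),
      Nonempty (IsColimit (Cofan.mk P inj)) ∧
      ∃ e : Q' ≅ E.R (∏ᶜ Xs), ∀ i, inj i ≫ f ≫ e.hom = E.Rmap (Pi.π Xs i)

/-- The class `E = F₁ ∪ F₂`. -/
def EClass (E : EnrichedHomData V V) (MV : ModelStructure V) [HasPullbacks V]
    [HasProducts.{v} V] (MF : ModelStructure (SmallFunctorCat V V))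
    [HasPushouts (SmallFunctorCat V V)] :
    MorphismProperty (SmallFunctorCat V V) :=
  fun _ _ f => F1Class E MV MF f ∨ F2Class E f

end EClasses

end Paper

namespace Paper

namespace GBFAux

variable {C : Type u} [Category.{v} C]

lemma weq_id (M : ModelStructure C) (X : C) : M.weq (𝟙 X) :=
  M.weq_iso _ inferInstance

lemma rlp_comp {P : MorphismProperty C} {X Y Z : C} {p : X ⟶ Y} {q : Y ⟶ Z}
    (hp : rlpOf P p) (hq : rlpOf P q) : rlpOf P (p ≫ q) := fun _ _ i hi => by
  haveI := hp i hi; haveI := hq i hi; infer_instance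

lemma rlp_retract {P : MorphismProperty C} {X Y X' Y' : C} {f : X ⟶ Y} {g : X' ⟶ Y'}
    (h : IsRetractOf f g) (hg : rlpOf P g) : rlpOf P f := by
  obtain ⟨i, r, i', r', hir, _hir', hig, hgr⟩ := h
  intro A B ii hii
  haveI := hg ii hii
  constructor
  intro u w sq
  have sq2 : CommSq (u ≫ i) ii g (w ≫ i') := ⟨by
    rw [Category.assoc, hig, ← Category.assoc, sq.w, Category.assoc]⟩
  refine ⟨⟨⟨sq2.lift ≫ r, ?_, ?_⟩⟩⟩
  · rw [← Category.assoc, sq2.fac_left, Category.assoc, hir, Category.comp_id]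
  · rw [Category.assoc, ← hgr, ← Category.assoc, sq2.fac_right, Category.assoc,
      _hir', Category.comp_id]

lemma rlp_pullback {P : MorphismProperty C} {T X Y Z : C} {fst : T ⟶ X} {snd : T ⟶ Y}
    {f : X ⟶ Z} {g : Y ⟶ Z} (hpb : IsPullback fst snd f g) (hf : rlpOf P f) :
    rlpOf P snd := by
  intro A B i hi
  haveI := hf i hi
  constructor
  intro u w sq
  have sq2 : CommSq (u ≫ fst) i f (w ≫ g) := ⟨by
    rw [Category.assoc, hpb.w, ← Category.assoc, sq.w, Category.assoc]⟩
  refine ⟨⟨⟨hpb.lift sq2.lift w sq2.fac_right, ?_, ?_⟩⟩⟩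
  · apply hpb.hom_ext
    · rw [Category.assoc, IsPullback.lift_fst, sq2.fac_left]
    · rw [Category.assoc, IsPullback.lift_snd, sq.w]
  · exact hpb.lift_snd _ _ _

lemma fib_of_rlp {M : ModelStructure C} {X Y : C} {p : X ⟶ Y}
    (h : ∀ ⦃A B : C⦄ (i : A ⟶ B), M.cof i → M.weq i → HasLiftingProperty i p) :
    M.fib p := by
  obtain ⟨Z, a, b, hacof, haweq, hbfib, hab⟩ := M.factor₂ p
  haveI := h a hacof haweq
  have sq : CommSq (𝟙 X) a p b := ⟨by rw [Category.id_comp, hab]⟩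
  exact M.fib_retract p b ⟨a, sq.lift, 𝟙 Y, 𝟙 Y, sq.fac_left, Category.id_comp _,
    by rw [hab, Category.comp_id], by rw [Category.comp_id, sq.fac_right]⟩ hbfib

lemma trivfib_of_rlp {M : ModelStructure C} {X Y : C} {p : X ⟶ Y}
    (h : ∀ ⦃A B : C⦄ (i : A ⟶ B), M.cof i → HasLiftingProperty i p) :
    M.fib p ∧ M.weq p := by
  obtain ⟨Z, a, b, hacof, hbfib, hbweq, hab⟩ := M.factor₁ p
  haveI := h a hacof
  have sq : CommSq (𝟙 X) a p b := ⟨by rw [Category.id_comp, hab]⟩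
  have hr : IsRetractOf p b := ⟨a, sq.lift, 𝟙 Y, 𝟙 Y, sq.fac_left, Category.id_comp _,
    by rw [hab, Category.comp_id], by rw [Category.comp_id, sq.fac_right]⟩
  exact ⟨M.fib_retract p b hr hbfib, M.weq_retract p b hr hbweq⟩

lemma fib_base_change {M : ModelStructure C} {T X Y Z : C} {fst : T ⟶ X} {snd : T ⟶ Y}
    {f : X ⟶ Z} {g : Y ⟶ Z} (hpb : IsPullback fst snd f g) (hf : M.fib f) : M.fib snd :=
  fib_of_rlp (fun _ _ i hic hiw =>
    rlp_pullback (P := fun _ _ j => M.cof j ∧ M.weq j) hpb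
      (fun _ _ i' hi' => M.lift_trivCof_fib i' f hi'.1 hi'.2 hf) i ⟨hic, hiw⟩)

lemma fib_comp {M : ModelStructure C} {X Y Z : C} {p : X ⟶ Y} {q : Y ⟶ Z}
    (hp : M.fib p) (hq : M.fib q) : M.fib (p ≫ q) :=
  fib_of_rlp (fun _ _ i hic hiw => by
    haveI := M.lift_trivCof_fib i p hic hiw hp
    haveI := M.lift_trivCof_fib i q hic hiw hq
    infer_instance)

variable {M : ModelStructure C} {L : HtpyLocalization M}

lemma qeq_id (X : C) : L.QEq (𝟙 X) := L.qmap_weq _ (weq_id M X)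

lemma weq_qeq {X Y : C} {f : X ⟶ Y} (h : M.weq f) : L.QEq f := L.qmap_weq f h

lemma local_transfer (hA1 : L.CondNatural) {X Y : C} (e : X ⟶ Y) (he : M.weq e) :
    M.weq (L.η X) ↔ M.weq (L.η Y) := by
  have h := hA1 e
  constructor
  · intro hx
    exact M.weq_of_precomp e (L.η Y) he
      (by rw [h]; exact M.weq_comp _ _ hx (L.qmap_weq e he))
  · intro hy
    exact M.weq_of_postcomp (L.η X) (L.qmap e) (L.qmap_weq e he)
      (by rw [← h]; exact M.weq_comp _ _ he hy)

/-- Key lifting lemma: a fibration between `η`-local objects is a `Q`-fibration. -/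
lemma qfib_of_local (hrp : M.RightProper)
    (hA4 : L.CondCube) [HasPullbacks C]
    {W Z : C} (v : W ⟶ Z) (hv : M.fib v) (hW : M.weq (L.η W)) (hZ : M.weq (L.η Z)) :
    L.QFib v := by
  intro A B i hi
  constructor
  intro α β sq
  obtain ⟨Q₁, Q₂, Q₃, Q₄, q₁, q₂, q₃, q₄, g₁₂, g₁₃, g₂₄, g₃₄, w₁, w₂, w₃, w₄,
    hw₁, hw₂, hw₃, hw₄, hq₁, hq₂, hq₃, hq₄, hsq, c₁₂, c₁₃, c₂₄, c₃₄,
    i₁₂, i₁₃, i₂₄, i₃₄⟩ := hA4 i α β v sq.w.symm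
  have hg₁₂ : M.weq g₁₂ := i₁₂.mpr hi.2
  have hq₃w : M.weq q₃ := by rw [hq₃]; exact M.weq_comp _ _ hW hw₃
  have hq₄w : M.weq q₄ := by rw [hq₄]; exact M.weq_comp _ _ hZ hw₄
  obtain ⟨W₁, u, v₁, hucof, huweq, hv₁, huv⟩ := M.factor₂ g₃₄
  have hfstweq : M.weq (pullback.fst v₁ q₄) :=
    hrp _ _ _ _ (IsPullback.of_hasPullback v₁ q₄).flip hq₄w hv₁
  have hcomm_t : (q₃ ≫ u) ≫ v₁ = v ≫ q₄ := by rw [Category.assoc, huv, c₃₄]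
  have htweq : M.weq (pullback.lift (q₃ ≫ u) v hcomm_t) := by
    apply M.weq_of_postcomp _ (pullback.fst v₁ q₄) hfstweq
    rw [pullback.lift_fst]
    exact M.weq_comp _ _ hq₃w huweq
  obtain ⟨W₂, c, r, hccof, hcweq, hrfib, hcr⟩ := M.factor₂ (pullback.lift (q₃ ≫ u) v hcomm_t)
  have hrweq : M.weq r := M.weq_of_precomp c r hcweq (by rw [hcr]; exact htweq)
  haveI := M.lift_trivCof_fib c v hccof hcweq hv
  have sqd : CommSq (𝟙 W) c v (r ≫ pullback.snd v₁ q₄) := ⟨by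
    rw [Category.id_comp, ← Category.assoc, hcr, pullback.lift_snd]⟩
  obtain ⟨R, m, e, hmcof, hmweq, hefib, hme⟩ := M.factor₂ g₁₂
  have heweq : M.weq e := M.weq_of_precomp m e hmweq (by rw [hme]; exact hg₁₂)
  haveI := M.lift_trivCof_fib m v₁ hmcof hmweq hv₁
  have sqm : CommSq (g₁₃ ≫ u) m v₁ (e ≫ g₂₄) := ⟨by
    rw [Category.assoc, huv, ← hsq, ← hme, Category.assoc]⟩
  haveI := M.lift_cof_trivFib i e hi.1 hefib heweq
  have sqt : CommSq (q₁ ≫ m) i e q₂ := ⟨by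
    rw [Category.assoc, hme, c₁₂]⟩
  have hn : (sqt.lift ≫ sqm.lift) ≫ v₁ = β ≫ q₄ := by
    rw [Category.assoc, sqm.fac_right, ← Category.assoc, sqt.fac_right, c₂₄]
  have hin : i ≫ pullback.lift (sqt.lift ≫ sqm.lift) β hn =
      α ≫ pullback.lift (q₃ ≫ u) v hcomm_t := by
    apply pullback.hom_ext
    · simp only [Category.assoc, pullback.lift_fst]
      rw [← Category.assoc i, sqt.fac_left, Category.assoc, sqm.fac_left,
        ← Category.assoc, c₁₃, Category.assoc]
    · simp only [Category.assoc, pullback.lift_snd]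
      exact sq.w.symm
  haveI := M.lift_cof_trivFib i r hi.1 hrfib hrweq
  have sql : CommSq (α ≫ c) i r (pullback.lift (sqt.lift ≫ sqm.lift) β hn) := ⟨by
    rw [Category.assoc, hcr, ← hin]⟩
  refine ⟨⟨⟨sql.lift ≫ sqd.lift, ?_, ?_⟩⟩⟩
  · rw [← Category.assoc, sql.fac_left, Category.assoc, sqd.fac_left, Category.comp_id]
  · rw [Category.assoc, sqd.fac_right, ← Category.assoc, sql.fac_right,
      pullback.lift_snd]

/-- The core factorization data for a map `f : X ⟶ Y`. -/
lemma core (hrp : M.RightProper) (hA1 : L.CondNatural) (hA3 : L.CondTwoOutOfThree)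
    (hA4 : L.CondCube) (hA5 : L.CondBaseChange) [HasPullbacks C]
    {X Y : C} (f : X ⟶ Y) :
    ∃ (W : C) (j : L.Q X ⟶ W) (v : W ⟶ L.Q Y) (_ : M.cof j) (_ : M.weq j)
      (_ : M.fib v) (_ : j ≫ v = L.qmap f) (_ : L.QFib v)
      (t : X ⟶ pullback v (L.η Y)),
      t ≫ pullback.fst v (L.η Y) = L.η X ≫ j ∧ t ≫ pullback.snd v (L.η Y) = f ∧
      L.QEq t ∧ L.QFib (pullback.snd v (L.η Y)) := by
  obtain ⟨W, j, v, hjcof, hjweq, hvfib, hjv⟩ := M.factor₂ (L.qmap f)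
  have hWloc : M.weq (L.η W) := (local_transfer hA1 j hjweq).mp (L.idem_eta X)
  have hvQ : L.QFib v := qfib_of_local hrp hA4 v hvfib hWloc (L.idem_eta Y)
  have hc : (L.η X ≫ j) ≫ v = f ≫ L.η Y := by
    rw [Category.assoc, hjv, ← hA1 f]
  refine ⟨W, j, v, hjcof, hjweq, hvfib, hjv, hvQ, pullback.lift (L.η X ≫ j) f hc,
    pullback.lift_fst _ _ _, pullback.lift_snd _ _ _, ?_,
    rlp_pullback (IsPullback.of_hasPullback v (L.η Y)) hvQ⟩
  have hfstQ : L.QEq (pullback.fst v (L.η Y)) :=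
    hA5 (pullback.snd v (L.η Y)) (pullback.fst v (L.η Y)) (L.η Y) v
      (IsPullback.of_hasPullback v (L.η Y)).flip hvQ (L.idem_q Y)
  refine hA3.2.1 _ (pullback.fst v (L.η Y)) hfstQ ?_
  rw [pullback.lift_fst]
  exact hA3.1 _ _ (L.idem_q X) (weq_qeq hjweq)

/-- Factorization into a `Q`-trivial cofibration followed by a `Q`-fibration. -/
lemma factor_Q (hrp : M.RightProper) (hA1 : L.CondNatural) (hA3 : L.CondTwoOutOfThree)
    (hA4 : L.CondCube) (hA5 : L.CondBaseChange) [HasPullbacks C]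
    {X Y : C} (f : X ⟶ Y) :
    ∃ (Z : C) (c : X ⟶ Z) (q : Z ⟶ Y), M.cof c ∧ L.QEq c ∧ L.QFib q ∧ c ≫ q = f := by
  obtain ⟨W, j, v, hjcof, hjweq, hvfib, hjv, hvQ, t, ht1, ht2, htQ, hsndQ⟩ :=
    core hrp hA1 hA3 hA4 hA5 f
  obtain ⟨Z, c, r, hccof, hrfib, hrweq, hcr⟩ := M.factor₁ t
  have hrQ : L.QFib r := fun _ _ i hi => M.lift_cof_trivFib i r hi.1 hrfib hrweq
  refine ⟨Z, c, r ≫ pullback.snd v (L.η Y), hccof, ?_, rlp_comp hrQ hsndQ,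
    by rw [← Category.assoc, hcr, ht2]⟩
  exact hA3.2.1 c r (weq_qeq hrweq) (by rw [hcr]; exact htQ)

/-- A map which is both a `Q`-fibration and a `Q`-equivalence is a trivial fibration. -/
lemma qtrivfib (hrp : M.RightProper) (hA1 : L.CondNatural) (hA3 : L.CondTwoOutOfThree)
    (hA4 : L.CondCube) (hA5 : L.CondBaseChange) [HasPullbacks C]
    {X Y : C} (g : X ⟶ Y) (hgQ : L.QFib g) (hgE : L.QEq g) :
    M.fib g ∧ M.weq g := by
  obtain ⟨W, j, v, hjcof, hjweq, hvfib, hjv, hvQ, t, ht1, ht2, htQ, hsndQ⟩ :=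
    core hrp hA1 hA3 hA4 hA5 g
  have hvweq : M.weq v := M.weq_of_precomp j v hjweq (by rw [hjv]; exact hgE)
  have hsndtf : M.fib (pullback.snd v (L.η Y)) ∧ M.weq (pullback.snd v (L.η Y)) :=
    trivfib_of_rlp (rlp_pullback (P := M.cof) (IsPullback.of_hasPullback v (L.η Y))
      (fun _ _ i hi => M.lift_cof_trivFib i v hi hvfib hvweq))
  obtain ⟨Z, c, r, hccof, hrfib, hrweq, hcr⟩ := M.factor₁ t
  have hcQ : L.QEq c := hA3.2.1 c r (weq_qeq hrweq) (by rw [hcr]; exact htQ)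
  haveI := hgQ c ⟨hccof, hcQ⟩
  have sqd : CommSq (𝟙 X) c g (r ≫ pullback.snd v (L.η Y)) := ⟨by
    rw [Category.id_comp, ← Category.assoc, hcr, ht2]⟩
  have hret : IsRetractOf g (r ≫ pullback.snd v (L.η Y)) :=
    ⟨c, sqd.lift, 𝟙 Y, 𝟙 Y, sqd.fac_left, Category.id_comp _,
      by rw [← Category.assoc, hcr, ht2, Category.comp_id],
      by rw [Category.comp_id, sqd.fac_right]⟩
  exact ⟨M.fib_retract _ _ hret (fib_comp hrfib hsndtf.1),
    M.weq_retract _ _ hret (M.weq_comp _ _ hrweq hsndtf.2)⟩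

/-- Characterization of `Q`-fibrations: a map is a `Q`-fibration iff it is a
fibration and its coaugmentation square is a homotopy fibre square. -/
lemma char (hrp : M.RightProper) (hA1 : L.CondNatural) (hA3 : L.CondTwoOutOfThree)
    (hA4 : L.CondCube) (hA5 : L.CondBaseChange) [HasPullbacks C]
    {X Y : C} (p : X ⟶ Y) :
    L.QFib p ↔ (M.fib p ∧ IsHtpyPullback M (L.η X) p (L.qmap p) (L.η Y)) := by
  obtain ⟨W, j, v, hjcof, hjweq, hvfib, hjv, hvQ, t, ht1, ht2, htQ, hsndQ⟩ :=
    core hrp hA1 hA3 hA4 hA5 p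
  -- the comparison map for any factorization of `η Y` is a weak equivalence iff `t` is
  have hdouble : ∀ (Y'' : C) (jj : Y ⟶ Y'') (pp : Y'' ⟶ L.Q Y) (_ : M.weq jj)
      (_ : M.fib pp) (_ : jj ≫ pp = L.η Y)
      (w' : L.η X ≫ L.qmap p = (p ≫ jj) ≫ pp),
      (M.weq (pullback.lift (L.η X) (p ≫ jj) w') ↔ M.weq t) := by
    intro Y'' jj pp hjj hpp fac w'
    have hDsnd : M.fib (pullback.snd v pp) :=
      fib_base_change (IsPullback.of_hasPullback v pp) hvfib
    have hDfst : M.fib (pullback.fst v pp) :=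
      fib_base_change (IsPullback.of_hasPullback v pp).flip hpp
    have heTc : pullback.fst v (L.η Y) ≫ v = (pullback.snd v (L.η Y) ≫ jj) ≫ pp := by
      rw [Category.assoc, fac, pullback.condition]
    have hbigT : IsPullback
        (pullback.lift (pullback.fst v (L.η Y)) (pullback.snd v (L.η Y) ≫ jj) heTc
          ≫ pullback.fst v pp)
        (pullback.snd v (L.η Y)) v (jj ≫ pp) := by
      rw [pullback.lift_fst, fac]; exact IsPullback.of_hasPullback v (L.η Y)
    have hleftT : IsPullback
        (pullback.lift (pullback.fst v (L.η Y)) (pullback.snd v (L.η Y) ≫ jj) heTc)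
        (pullback.snd v (L.η Y)) (pullback.snd v pp) jj :=
      IsPullback.of_right hbigT (pullback.lift_snd _ _ _) (IsPullback.of_hasPullback v pp)
    have heTweq : M.weq
        (pullback.lift (pullback.fst v (L.η Y)) (pullback.snd v (L.η Y) ≫ jj) heTc) :=
      hrp _ _ _ _ hleftT.flip hjj hDsnd
    have hePc : (pullback.fst (L.qmap p) pp ≫ j) ≫ v = pullback.snd (L.qmap p) pp ≫ pp := by
      rw [Category.assoc, hjv, pullback.condition]
    have hbigP : IsPullback
        (pullback.lift (pullback.fst (L.qmap p) pp ≫ j) (pullback.snd (L.qmap p) pp) hePc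
          ≫ pullback.snd v pp)
        (pullback.fst (L.qmap p) pp) pp (j ≫ v) := by
      rw [pullback.lift_snd, hjv]; exact (IsPullback.of_hasPullback (L.qmap p) pp).flip
    have hleftP : IsPullback
        (pullback.lift (pullback.fst (L.qmap p) pp ≫ j) (pullback.snd (L.qmap p) pp) hePc)
        (pullback.fst (L.qmap p) pp) (pullback.fst v pp) j :=
      IsPullback.of_right hbigP (pullback.lift_fst _ _ _)
        (IsPullback.of_hasPullback v pp).flip
    have hePweq : M.weq
        (pullback.lift (pullback.fst (L.qmap p) pp ≫ j) (pullback.snd (L.qmap p) pp) hePc) :=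
      hrp _ _ _ _ hleftP.flip hjweq hDfst
    have key : pullback.lift (L.η X) (p ≫ jj) w' ≫
        pullback.lift (pullback.fst (L.qmap p) pp ≫ j) (pullback.snd (L.qmap p) pp) hePc =
        t ≫ pullback.lift (pullback.fst v (L.η Y)) (pullback.snd v (L.η Y) ≫ jj) heTc := by
      apply pullback.hom_ext
      · simp only [Category.assoc, pullback.lift_fst, pullback.lift_fst_assoc]
        rw [ht1]
      · simp only [Category.assoc, pullback.lift_snd, pullback.lift_snd_assoc]
        rw [← Category.assoc, ht2]
    constructor
    · intro hκ
      refine M.weq_of_postcomp t _ heTweq ?_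
      rw [← key]
      exact M.weq_comp _ _ hκ hePweq
    · intro htw
      refine M.weq_of_postcomp _ _ hePweq ?_
      rw [key]
      exact M.weq_comp _ _ htw heTweq
  constructor
  · intro hpQ
    have hpfib : M.fib p := fib_of_rlp (fun A B i hic hiw => hpQ i ⟨hic, weq_qeq hiw⟩)
    -- Brown's lemma argument inside the localized structure: `t` is a weak equivalence
    have hpr1Q : L.QFib
        (pullback.fst (pullback.snd v (L.η Y)) (pullback.snd v (L.η Y))) :=
      rlp_pullback (IsPullback.of_hasPullback (pullback.snd v (L.η Y))
        (pullback.snd v (L.η Y))).flip hsndQ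
    have hpr2Q : L.QFib
        (pullback.snd (pullback.snd v (L.η Y)) (pullback.snd v (L.η Y))) :=
      rlp_pullback (IsPullback.of_hasPullback (pullback.snd v (L.η Y))
        (pullback.snd v (L.η Y))) hsndQ
    obtain ⟨PT, w, φ₂, hwcof, hwQ, hφ₂Q, hwφ⟩ := factor_Q hrp hA1 hA3 hA4 hA5
      ((pullback.lift (𝟙 _) (𝟙 _) rfl : pullback v (L.η Y) ⟶
        pullback (pullback.snd v (L.η Y)) (pullback.snd v (L.η Y))))
    have hψ₁Q : L.QFib (φ₂ ≫ pullback.fst (pullback.snd v (L.η Y)) (pullback.snd v (L.η Y))) :=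
      rlp_comp hφ₂Q hpr1Q
    have hψ₁E : L.QEq (φ₂ ≫ pullback.fst (pullback.snd v (L.η Y)) (pullback.snd v (L.η Y))) := by
      refine hA3.2.2 w _ hwQ ?_
      rw [← Category.assoc, hwφ, pullback.lift_fst]
      exact qeq_id _
    have hθc : (pullback.fst p (pullback.snd v (L.η Y)) ≫ t) ≫ pullback.snd v (L.η Y) =
        pullback.snd p (pullback.snd v (L.η Y)) ≫ pullback.snd v (L.η Y) := by
      rw [Category.assoc, ht2]; exact pullback.condition
    have hbot : IsPullback (pullback.lift _ _ hθc)
        (pullback.fst p (pullback.snd v (L.η Y)))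
        (pullback.fst (pullback.snd v (L.η Y)) (pullback.snd v (L.η Y))) t := by
      refine IsPullback.of_right ?_ (pullback.lift_fst _ _ _)
        (IsPullback.of_hasPullback _ _).flip
      rw [pullback.lift_snd, ht2]
      exact (IsPullback.of_hasPullback p (pullback.snd v (L.η Y))).flip
    have hpaste : IsPullback (pullback.fst φ₂ (pullback.lift _ _ hθc))
        (pullback.snd φ₂ (pullback.lift _ _ hθc) ≫ pullback.fst p (pullback.snd v (L.η Y)))
        (φ₂ ≫ pullback.fst (pullback.snd v (L.η Y)) (pullback.snd v (L.η Y))) t :=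
      (IsPullback.of_hasPullback φ₂ (pullback.lift _ _ hθc)).paste_vert hbot
    have hζXQ : L.QFib
        (pullback.snd φ₂ (pullback.lift _ _ hθc) ≫ pullback.fst p (pullback.snd v (L.η Y))) :=
      rlp_pullback hpaste hψ₁Q
    have hζPQ : L.QEq (pullback.fst φ₂ (pullback.lift _ _ hθc)) :=
      hA5 _ _ t _ hpaste.flip hψ₁Q htQ
    have hsXc : 𝟙 X ≫ p = t ≫ pullback.snd v (L.η Y) := by
      rw [Category.id_comp, ht2]
    have hsc : (t ≫ w) ≫ φ₂ = pullback.lift (𝟙 X) t hsXc ≫ pullback.lift _ _ hθc := by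
      apply pullback.hom_ext
      · simp only [Category.assoc, pullback.lift_fst, pullback.lift_fst_assoc]
        rw [← Category.assoc w, hwφ, pullback.lift_fst, Category.comp_id, Category.id_comp]
      · simp only [Category.assoc, pullback.lift_snd, pullback.lift_snd_assoc]
        rw [← Category.assoc w, hwφ, pullback.lift_snd, Category.comp_id]
    have hsζX : pullback.lift (t ≫ w) (pullback.lift (𝟙 X) t hsXc) hsc ≫
        (pullback.snd φ₂ (pullback.lift _ _ hθc) ≫ pullback.fst p (pullback.snd v (L.η Y))) =
        𝟙 X := by
      rw [← Category.assoc, pullback.lift_snd, pullback.lift_fst]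
    have hsQ : L.QEq (pullback.lift (t ≫ w) (pullback.lift (𝟙 X) t hsXc) hsc) := by
      refine hA3.2.1 _ _ hζPQ ?_
      rw [pullback.lift_fst]
      exact hA3.1 _ _ htQ hwQ
    have hζXE : L.QEq
        (pullback.snd φ₂ (pullback.lift _ _ hθc) ≫ pullback.fst p (pullback.snd v (L.η Y))) := by
      refine hA3.2.2 _ _ hsQ ?_
      rw [hsζX]
      exact qeq_id X
    have hζXw : M.weq
        (pullback.snd φ₂ (pullback.lift _ _ hθc) ≫ pullback.fst p (pullback.snd v (L.η Y))) :=
      (qtrivfib hrp hA1 hA3 hA4 hA5 _ hζXQ hζXE).2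
    have hsw : M.weq (pullback.lift (t ≫ w) (pullback.lift (𝟙 X) t hsXc) hsc) :=
      M.weq_of_postcomp _ _ hζXw (by rw [hsζX]; exact weq_id M X)
    have hzSQ : L.QFib (pullback.snd φ₂ (pullback.lift _ _ hθc)) :=
      rlp_pullback (IsPullback.of_hasPullback φ₂ (pullback.lift _ _ hθc)) hφ₂Q
    have hbQ : L.QFib (pullback.snd p (pullback.snd v (L.η Y))) :=
      rlp_pullback (IsPullback.of_hasPullback p (pullback.snd v (L.η Y))) hpQ
    have hφQ : L.QFib
        (pullback.snd φ₂ (pullback.lift _ _ hθc) ≫ pullback.snd p (pullback.snd v (L.η Y))) :=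
      rlp_comp hzSQ hbQ
    have hts : t = pullback.lift (t ≫ w) (pullback.lift (𝟙 X) t hsXc) hsc ≫
        (pullback.snd φ₂ (pullback.lift _ _ hθc) ≫ pullback.snd p (pullback.snd v (L.η Y))) := by
      rw [← Category.assoc, pullback.lift_snd, pullback.lift_snd]
    have hφE : L.QEq
        (pullback.snd φ₂ (pullback.lift _ _ hθc) ≫ pullback.snd p (pullback.snd v (L.η Y))) := by
      refine hA3.2.2 _ _ hsQ ?_
      rw [← hts]
      exact htQ
    have hφw : M.weq
        (pullback.snd φ₂ (pullback.lift _ _ hθc) ≫ pullback.snd p (pullback.snd v (L.η Y))) :=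
      (qtrivfib hrp hA1 hA3 hA4 hA5 _ hφQ hφE).2
    have htweq : M.weq t := by
      rw [hts]
      exact M.weq_comp _ _ hsw hφw
    exact ⟨hpfib, (hA1 p).symm,
      fun Y'' jj pp hjj hpp fac => (hdouble Y'' jj pp hjj hpp fac _).mpr htweq⟩
  · rintro ⟨hpfib, w₀, hcomp⟩
    obtain ⟨Y'', jj, pp, hjjcof, hjjweq, hppfib, fac⟩ := M.factor₂ (L.η Y)
    have hκ := hcomp Y'' jj pp hjjweq hppfib fac
    have htw : M.weq t := (hdouble Y'' jj pp hjjweq hppfib fac _).mp hκ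
    obtain ⟨X', c, r, hccof, hcweq, hrfib, hcr⟩ := M.factor₂ t
    have hrweq : M.weq r := M.weq_of_precomp c r hcweq (by rw [hcr]; exact htw)
    haveI := M.lift_trivCof_fib c p hccof hcweq hpfib
    have sqd : CommSq (𝟙 X) c p (r ≫ pullback.snd v (L.η Y)) := ⟨by
      rw [Category.id_comp, ← Category.assoc, hcr, ht2]⟩
    have hret : IsRetractOf p (r ≫ pullback.snd v (L.η Y)) :=
      ⟨c, sqd.lift, 𝟙 Y, 𝟙 Y, sqd.fac_left, Category.id_comp _,
        by rw [← Category.assoc, hcr, ht2, Category.comp_id],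
        by rw [Category.comp_id, sqd.fac_right]⟩
    have hrQ : L.QFib r := fun _ _ i hi => M.lift_cof_trivFib i r hi.1 hrfib hrweq
    exact rlp_retract hret (rlp_comp hrQ hsndQ)

end GBFAux

/-- Theorem `main`, generalized Bousfield–Friedlander localization.
Given a left and right proper model category `C` and a (possibly non-functorial)
homotopy localization construction `Q` satisfying conditions (A1)–(A5), the
`Q`-equivalences, cofibrations of `C` and `Q`-fibrations form a model structure on `C`;
moreover a map is a `Q`-fibration iff it is a fibration and the coaugmentation square is
a homotopy fibre square. -/
theorem generalized_bousfield_friedlander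
    {C : Type u} [Category.{v} C] [HasPullbacks C]
    (M : ModelStructure C) (hlp : M.LeftProper) (hrp : M.RightProper)
    (L : HtpyLocalization M)
    (hA1 : L.CondNatural) (hA2 : L.CondRetract) (hA3 : L.CondTwoOutOfThree)
    (hA4 : L.CondCube) (hA5 : L.CondBaseChange) :
    (∃ MQ : ModelStructure C,
        MQ.weq = L.QEq ∧ MQ.cof = M.cof ∧ MQ.fib = L.QFib) ∧
    (∀ ⦃X Y : C⦄ (f : X ⟶ Y),
        L.QFib f ↔
          (M.fib f ∧ IsHtpyPullback M (L.η X) f (L.qmap f) (L.η Y))) := by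
  refine ⟨⟨{ weq := L.QEq
             fib := L.QFib
             cof := M.cof
             weq_iso := fun X Y f hf => L.qmap_weq f (M.weq_iso f hf)
             weq_comp := hA3.1
             weq_of_postcomp := hA3.2.1
             weq_of_precomp := hA3.2.2
             weq_retract := hA2
             fib_retract := fun _ _ _ _ f g h hg => GBFAux.rlp_retract h hg
             cof_retract := M.cof_retract
             lift_cof_trivFib := fun A B X Y i p hi hp hw => by
               obtain ⟨hf, hwq⟩ := GBFAux.qtrivfib hrp hA1 hA3 hA4 hA5 p hp hw
               exact M.lift_cof_trivFib i p hi hf hwq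
             lift_trivCof_fib := fun A B X Y i p hic hiw hp => hp i ⟨hic, hiw⟩
             factor₁ := fun X Y f => by
               obtain ⟨Z, a, b, ha, hbf, hbw, hab⟩ := M.factor₁ f
               exact ⟨Z, a, b, ha,
                 fun _ _ i hi => M.lift_cof_trivFib i b hi.1 hbf hbw,
                 GBFAux.weq_qeq hbw, hab⟩
             factor₂ := fun X Y f => by
               obtain ⟨Z, c, q, hc, hcE, hqQ, h⟩ :=
                 GBFAux.factor_Q hrp hA1 hA3 hA4 hA5 f
               exact ⟨Z, c, q, hc, hcE, hqQ, h⟩ }, rfl, rfl, rfl⟩,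
    fun X Y f => GBFAux.char hrp hA1 hA3 hA4 hA5 f⟩

end Paper
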